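/- arXiv:1612.02354 — 2 statements merged into one kernel-verified Lean document; each statement's English description precedes it below -/
import Mathlib

section
/- Let φ ∈ L²(ℝ³) with (1+|x|)³ φ ∈ L¹(ℝ³) and ∫ φ(x) dx = 0. Then there is a constant C such that for all κ > 0: |⟨φ, (-Δ+κ²)^{-3} φ⟩| ≤ C κ^{-1} and |⟨φ, (-Δ+κ²)^{-4} φ⟩| ≤ C κ^{-3}. -/
/-! Because `∫ φ = 0`, `φ̂ k = ∫ (e^{-2πi⟨x,k⟩} - 1) φ x dx`, and `|e^{iθ} - 1| ≤ |θ|` gives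
`|φ̂ k| ≤ 2π ‖x φ‖₁ |k|`. So the integrand is at most a constant times `|k|² / (|k|² + κ²)ⁿ`,
and the substitution `k = κ u` shows that this integral over `ℝᵈ` equals `κ^(d + 2 - 2n)` times
a constant, finite as soon as `d + 2 < 2n`; here `d = 3` and `n = 3, 4`. -/

open MeasureTheory FourierTransform

noncomputable section

abbrev R3 := EuclideanSpace ℝ (Fin 3)

open Real Module

section Fourier

variable {V E : Type*} [NormedAddCommGroup V] [InnerProductSpace ℝ V] [MeasurableSpace V]
  [BorelSpace V] [FiniteDimensional ℝ V] [NormedAddCommGroup E] [NormedSpace ℂ E]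

open scoped RealInnerProductSpace

theorem norm_fourierChar_smul_sub_le (t : ℝ) (y : E) : ‖𝐞 t • y - y‖ ≤ 2 * π * |t| * ‖y‖ := by
  calc ‖𝐞 t • y - y‖ = ‖(Complex.exp (Complex.I * ↑(2 * π * t)) - 1) • y‖ := by
        rw [sub_smul, one_smul, Circle.smul_def, Real.fourierChar_apply, mul_comm]
    _ ≤ ‖2 * π * t‖ * ‖y‖ := by rw [norm_smul]; gcongr; exact norm_exp_I_mul_ofReal_sub_one_le
    _ = 2 * π * |t| * ‖y‖ := by rw [Real.norm_eq_abs, abs_mul, abs_of_pos two_pi_pos]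

theorem norm_fourier_sub_integral_le {f : V → E} (hf : Integrable f)
    (hf' : Integrable (fun v ↦ ‖v‖ * ‖f v‖)) (w : V) :
    ‖𝓕 f w - ∫ v, f v‖ ≤ 2 * π * (∫ v, ‖v‖ * ‖f v‖) * ‖w‖ := by
  have hpt (v : V) : ‖𝐞 (-⟪v, w⟫) • f v - f v‖ ≤ 2 * π * ‖w‖ * (‖v‖ * ‖f v‖) := by
    calc ‖𝐞 (-⟪v, w⟫) • f v - f v‖ ≤ 2 * π * |⟪v, w⟫| * ‖f v‖ := by
          simpa using norm_fourierChar_smul_sub_le (-⟪v, w⟫) (f v)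
      _ ≤ 2 * π * (‖v‖ * ‖w‖) * ‖f v‖ := by gcongr; exact abs_real_inner_le_norm v w
      _ = 2 * π * ‖w‖ * (‖v‖ * ‖f v‖) := by ring
  rw [Real.fourier_eq, ← integral_sub ((Real.fourierIntegral_convergent_iff w).2 hf) hf]
  calc ‖∫ v, 𝐞 (-⟪v, w⟫) • f v - f v‖ ≤ ∫ v, 2 * π * ‖w‖ * (‖v‖ * ‖f v‖) :=
        norm_integral_le_of_norm_le (hf'.const_mul _) (.of_forall hpt)
    _ = 2 * π * (∫ v, ‖v‖ * ‖f v‖) * ‖w‖ := by rw [integral_const_mul]; ring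

end Fourier

section Scaling

theorem norm_sq_div_norm_sq_add_sq_pow_eq {E : Type*} [SeminormedAddCommGroup E]
    [NormedSpace ℝ E] {κ : ℝ} (hκ : κ ≠ 0) (n : ℕ) (x : E) :
    ‖x‖ ^ 2 / (‖x‖ ^ 2 + κ ^ 2) ^ n
      = κ ^ (2 - 2 * n : ℤ) * (‖κ⁻¹ • x‖ ^ 2 / (‖κ⁻¹ • x‖ ^ 2 + 1) ^ n) := by
  rw [show (2 - 2 * n : ℤ) = ((2 : ℕ) : ℤ) - ((2 * n : ℕ) : ℤ) by push_cast; ring,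
    zpow_sub₀ hκ, zpow_natCast, zpow_natCast, norm_smul, norm_inv, Real.norm_eq_abs, mul_pow,
    inv_pow, sq_abs, pow_mul]
  field_simp
  rw [mul_assoc, ← mul_pow, mul_div_cancel₀ _ (pow_ne_zero 2 hκ)]

variable {E : Type*} [NormedAddCommGroup E] [NormedSpace ℝ E] [FiniteDimensional ℝ E]
  [MeasurableSpace E] [BorelSpace E] {μ : Measure E} [μ.IsAddHaarMeasure]
  {F : Type*} [NormedAddCommGroup F]

theorem integrable_norm_sq_div_norm_sq_add_one_pow {n : ℕ} (hn : finrank ℝ E + 2 < 2 * n) :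
    Integrable (fun u : E ↦ ‖u‖ ^ 2 / (‖u‖ ^ 2 + 1) ^ n) μ := by
  have hr : (finrank ℝ E : ℝ) < 2 * n - 2 := by
    have : ((finrank ℝ E + 2 : ℕ) : ℝ) < ((2 * n : ℕ) : ℝ) := by exact_mod_cast hn
    push_cast at this; linarith
  refine (integrable_rpow_neg_one_add_norm_sq hr).mono'
    (Measurable.aestronglyMeasurable (by fun_prop)) (.of_forall fun u ↦ ?_)
  have ha : (0 : ℝ) < 1 + ‖u‖ ^ 2 := by positivity
  rw [Real.norm_of_nonneg (by positivity), show -(2 * n - 2 : ℝ) / 2 = 1 - n by ring,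
    Real.rpow_sub ha, Real.rpow_one, Real.rpow_natCast, add_comm (‖u‖ ^ 2)]
  gcongr
  linarith

theorem integrable_norm_sq_div_norm_sq_add_sq_pow {n : ℕ} (hn : finrank ℝ E + 2 < 2 * n)
    {κ : ℝ} (hκ : κ ≠ 0) : Integrable (fun k : E ↦ ‖k‖ ^ 2 / (‖k‖ ^ 2 + κ ^ 2) ^ n) μ := by
  simp_rw [norm_sq_div_norm_sq_add_sq_pow_eq hκ n]
  exact ((integrable_norm_sq_div_norm_sq_add_one_pow hn).comp_smul (inv_ne_zero hκ)).const_mul _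

theorem integral_norm_sq_div_norm_sq_add_sq_pow {κ : ℝ} (hκ : 0 < κ) (n : ℕ) :
    ∫ k, ‖k‖ ^ 2 / (‖k‖ ^ 2 + κ ^ 2) ^ n ∂μ
      = κ ^ ((finrank ℝ E : ℤ) + 2 - 2 * n) * ∫ u, ‖u‖ ^ 2 / (‖u‖ ^ 2 + 1) ^ n ∂μ := by
  simp_rw [norm_sq_div_norm_sq_add_sq_pow_eq hκ.ne' n]
  rw [integral_const_mul,
    Measure.integral_comp_inv_smul_of_nonneg μ (fun u ↦ ‖u‖ ^ 2 / (‖u‖ ^ 2 + 1) ^ n) hκ.le,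
    smul_eq_mul, ← mul_assoc, ← zpow_natCast, ← zpow_add₀ hκ.ne']
  ring_nf

theorem integral_norm_sq_div_norm_sq_add_sq_pow_le_of_norm_le {g : E → F} {L : ℝ}
    (hg : ∀ k, ‖g k‖ ≤ L * ‖k‖) {n : ℕ} (hn : finrank ℝ E + 2 < 2 * n) {κ : ℝ} (hκ : 0 < κ) :
    ∫ k, ‖g k‖ ^ 2 / (‖k‖ ^ 2 + κ ^ 2) ^ n ∂μ
      ≤ L ^ 2 * (∫ u, ‖u‖ ^ 2 / (‖u‖ ^ 2 + 1) ^ n ∂μ) * κ ^ ((finrank ℝ E : ℤ) + 2 - 2 * n) := by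
  calc ∫ k, ‖g k‖ ^ 2 / (‖k‖ ^ 2 + κ ^ 2) ^ n ∂μ
      ≤ ∫ k, L ^ 2 * (‖k‖ ^ 2 / (‖k‖ ^ 2 + κ ^ 2) ^ n) ∂μ := by
        refine integral_mono_of_nonneg (.of_forall fun k ↦ by positivity)
          ((integrable_norm_sq_div_norm_sq_add_sq_pow hn hκ.ne').const_mul _)
          (.of_forall fun k ↦ ?_)
        dsimp only
        rw [← mul_div_assoc, ← mul_pow]
        gcongr
        exact hg k
    _ = _ := by rw [integral_const_mul, integral_norm_sq_div_norm_sq_add_sq_pow hκ]; ring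

end Scaling

theorem MeasureTheory.Integrable.norm_pow_mul_norm_of_one_add_norm_pow {E F : Type*}
    [NormedAddCommGroup E] [MeasurableSpace E] [OpensMeasurableSpace E] [NormedAddCommGroup F]
    {μ : Measure E}
    {f : E → F} (hf : AEStronglyMeasurable f μ) {j m : ℕ} (hjm : j ≤ m)
    (h : Integrable (fun x ↦ (1 + ‖x‖) ^ m * ‖f x‖) μ) :
    Integrable (fun x ↦ ‖x‖ ^ j * ‖f x‖) μ := by
  refine h.mono' ((continuous_norm.pow j).aestronglyMeasurable.mul hf.norm)
    (.of_forall fun x ↦ ?_)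
  rw [Real.norm_of_nonneg (by positivity)]
  have h1 : 1 ≤ 1 + ‖x‖ := le_add_of_nonneg_right (norm_nonneg x)
  gcongr
  calc ‖x‖ ^ j ≤ (1 + ‖x‖) ^ j := by gcongr; linarith
    _ ≤ (1 + ‖x‖) ^ m := pow_le_pow_right₀ h1 hjm

/-- For `φ ∈ L²(ℝ³)` with `(1+|x|)³ φ ∈ L¹` and `∫ φ = 0`, there is a constant `C` such
that for all `κ > 0`: `|⟨φ, (-Δ+κ²)^{-3} φ⟩| ≤ C κ⁻¹` and `|⟨φ, (-Δ+κ²)^{-4} φ⟩| ≤ C κ⁻³`,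
where the resolvent powers are expressed via the Fourier multiplier `(k²+κ²)^{-n}`. -/
theorem resolvent_cube_and_fourth_power_bounds
    (φ : R3 → ℂ) (hφ2 : MemLp φ 2 volume)
    (hφw : Integrable (fun x : R3 => (1 + ‖x‖) ^ 3 * ‖φ x‖) volume)
    (hφ0 : (∫ x : R3, φ x) = 0) :
    ∃ C : ℝ, ∀ κ : ℝ, 0 < κ →
      |∫ k : R3, ‖𝓕 φ k‖ ^ 2 / (‖k‖ ^ 2 + κ ^ 2) ^ 3| ≤ C * κ⁻¹ ∧
      |∫ k : R3, ‖𝓕 φ k‖ ^ 2 / (‖k‖ ^ 2 + κ ^ 2) ^ 4| ≤ C * (κ ^ 3)⁻¹ := by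
  have hφ1 : Integrable φ := (integrable_norm_iff hφ2.aestronglyMeasurable).1 <| by
    simpa using hφw.norm_pow_mul_norm_of_one_add_norm_pow hφ2.aestronglyMeasurable (j := 0)
      (by norm_num)
  have hφx := hφw.norm_pow_mul_norm_of_one_add_norm_pow hφ2.aestronglyMeasurable (j := 1)
    (by norm_num)
  simp only [pow_one] at hφx
  set L := 2 * π * ∫ x, ‖x‖ * ‖φ x‖
  have hF (k : R3) : ‖𝓕 φ k‖ ≤ L * ‖k‖ := by
    simpa [hφ0] using norm_fourier_sub_integral_le hφ1 hφx k
  set c : ℕ → ℝ := fun n ↦ ∫ u : R3, ‖u‖ ^ 2 / (‖u‖ ^ 2 + 1) ^ n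
  have hc (n : ℕ) : 0 ≤ c n := integral_nonneg fun u ↦ by positivity
  refine ⟨L ^ 2 * (c 3 + c 4), fun κ hκ ↦ ⟨?_, ?_⟩⟩ <;>
    rw [abs_of_nonneg (integral_nonneg fun k ↦ by positivity)] <;>
    refine (integral_norm_sq_div_norm_sq_add_sq_pow_le_of_norm_le hF (by simp) hκ).trans ?_ <;>
    norm_num <;>
    gcongr
  exacts [le_add_of_nonneg_right (hc 4), le_add_of_nonneg_left (hc 3)]
end
end

section
/- Let H_a be self-adjoint on a Hilbert space, ε : ℝ → ℝ measurable with |ε(t)| ≤ C₁ η |t - t_a| for a fixed t_a, and suppose |⟨ς, e^{-itH_a} ς⟩| ≤ C₂(1+|t|)^{-5/2} for a unit vector ς. Then for t_c ≤ t_a ≤ t_c' the double integral I₄ = ∫_{t_a}^{t_c'} ∫_{t_c}^{t_a} |ε(u)| |ε(v)| |⟨ς, e^{-i(u-v)H_a} ς⟩| dv du satisfies I₄ ≤ C η² · (16/9) · (1 + (t_c'-t_a))^{3/4} (1 + (t_a - t_c))^{3/4}. In particular, if t_c' - t_a and t_a - t_c are of order η^{-1}, then I₄ = O(η^{1/2}).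 -/
/-!
With `x = u - t_a ≥ 0` and `y = t_a - v ≥ 0` we have `|u - v| = x + y`, and
`(1 + x)(1 + y) ≤ (1 + x + y)²` decouples the decay:
`(1 + x + y)^{-5/2} ≤ (1 + x)^{-5/4}(1 + y)^{-5/4}`.
The linear factors `x`, `y` coming from `|ε|` are absorbed, leaving `(1 + x)^{-1/4}(1 + y)^{-1/4}`,
and `∫₀ᵀ (1 + s)^{-1/4} ds ≤ (4/3)(1 + T)^{3/4}` bounds each of the two resulting integrals.
-/

open MeasureTheory Real Set intervalIntegral

lemma one_add_add_rpow_neg_le {x y p : ℝ} (hx : 0 ≤ x) (hy : 0 ≤ y) (hp : 0 ≤ p) :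
    (1 + (x + y)) ^ (-(2 * p)) ≤ (1 + x) ^ (-p) * (1 + y) ^ (-p) := by
  have hxy : (1 + x) * (1 + y) ≤ (1 + (x + y)) ^ 2 := by nlinarith
  calc (1 + (x + y)) ^ (-(2 * p)) = ((1 + (x + y)) ^ 2) ^ (-p) := by
        rw [← rpow_natCast, ← rpow_mul (by linarith)]; norm_num
    _ ≤ ((1 + x) * (1 + y)) ^ (-p) :=
        rpow_le_rpow_of_nonpos (by positivity) hxy (by linarith)
    _ = (1 + x) ^ (-p) * (1 + y) ^ (-p) := mul_rpow (by linarith) (by linarith)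

lemma mul_one_add_rpow_neg_le {x : ℝ} (hx : 0 ≤ x) (p : ℝ) :
    x * (1 + x) ^ (-p) ≤ (1 + x) ^ (1 - p) := by
  calc x * (1 + x) ^ (-p) ≤ (1 + x) * (1 + x) ^ (-p) := by
        gcongr
        linarith
    _ = (1 + x) ^ (1 - p) := by
        rw [sub_eq_add_neg, rpow_add (by linarith), rpow_one]

lemma mul_mul_one_add_add_rpow_neg_le {x y p : ℝ} (hx : 0 ≤ x) (hy : 0 ≤ y) (hp : 0 ≤ p) :
    x * y * (1 + (x + y)) ^ (-(2 * p)) ≤ (1 + x) ^ (1 - p) * (1 + y) ^ (1 - p) :=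
  calc x * y * (1 + (x + y)) ^ (-(2 * p))
      ≤ x * y * ((1 + x) ^ (-p) * (1 + y) ^ (-p)) := by
        gcongr
        exact one_add_add_rpow_neg_le hx hy hp
    _ = (x * (1 + x) ^ (-p)) * (y * (1 + y) ^ (-p)) := by ring
    _ ≤ (1 + x) ^ (1 - p) * (1 + y) ^ (1 - p) := by
        gcongr
        · exact mul_one_add_rpow_neg_le hx p
        · exact mul_one_add_rpow_neg_le hy p

lemma integral_one_add_rpow_le {r : ℝ} (hr : -1 < r) (T : ℝ) :
    ∫ s in (0 : ℝ)..T, (1 + s) ^ r ≤ (1 + T) ^ (r + 1) / (r + 1) := by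
  have hr1 : 0 < r + 1 := by linarith
  rw [integral_comp_add_left (fun x => x ^ r), add_zero, integral_rpow (Or.inl hr), one_rpow]
  gcongr
  linarith

lemma integral_one_add_sub_right_rpow_le {r : ℝ} (hr : -1 < r) (a b : ℝ) :
    ∫ u in a..b, (1 + (u - a)) ^ r ≤ (1 + (b - a)) ^ (r + 1) / (r + 1) := by
  rw [integral_comp_sub_right (fun s => (1 + s) ^ r), sub_self]
  exact integral_one_add_rpow_le hr _

lemma integral_one_add_sub_left_rpow_le {r : ℝ} (hr : -1 < r) (a b : ℝ) :
    ∫ v in a..b, (1 + (b - v)) ^ r ≤ (1 + (b - a)) ^ (r + 1) / (r + 1) := by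
  rw [integral_comp_sub_left (fun s => (1 + s) ^ r), sub_self]
  exact integral_one_add_rpow_le hr _

lemma intervalIntegrable_one_add_rpow {φ : ℝ → ℝ} {a b : ℝ} (hφ : Continuous φ)
    (hφ0 : ∀ x ∈ uIcc a b, 0 ≤ φ x) (r : ℝ) :
    IntervalIntegrable (fun x => (1 + φ x) ^ r) volume a b :=
  ContinuousOn.intervalIntegrable <|
    ContinuousOn.rpow_const (by fun_prop) fun x hx => Or.inl (by linarith [hφ0 x hx])

-- No integrability is needed on the left: a non-integrable `f` integrates to `0`.
lemma integral_mono_on_of_nonneg {f g : ℝ → ℝ} {a b : ℝ} (hab : a ≤ b)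
    (hg : IntervalIntegrable g volume a b) (hg0 : ∀ x ∈ Icc a b, 0 ≤ g x)
    (h : ∀ x ∈ Icc a b, f x ≤ g x) :
    ∫ x in a..b, f x ≤ ∫ x in a..b, g x := by
  by_cases hf : IntervalIntegrable f volume a b
  · exact integral_mono_on hab hf hg h
  · rw [integral_undef hf]
    exact integral_nonneg hab hg0

lemma integral_integral_le_mul_of_le_mul {F : ℝ → ℝ → ℝ} {f g : ℝ → ℝ} {a b c d : ℝ}
    (hab : a ≤ b) (hcd : c ≤ d) (hf : IntervalIntegrable f volume a b)
    (hg : IntervalIntegrable g volume c d) (hf0 : ∀ u ∈ Icc a b, 0 ≤ f u)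
    (hg0 : ∀ v ∈ Icc c d, 0 ≤ g v) (hF : ∀ u ∈ Icc a b, ∀ v ∈ Icc c d, F u v ≤ f u * g v) :
    ∫ u in a..b, ∫ v in c..d, F u v ≤ (∫ u in a..b, f u) * ∫ v in c..d, g v := by
  have hg_int : 0 ≤ ∫ v in c..d, g v := integral_nonneg hcd hg0
  have hinner : ∀ u ∈ Icc a b, ∫ v in c..d, F u v ≤ f u * ∫ v in c..d, g v := fun u hu => by
    rw [← intervalIntegral.integral_const_mul]
    exact integral_mono_on_of_nonneg hcd (hg.const_mul _)
      (fun v hv => mul_nonneg (hf0 u hu) (hg0 v hv)) (hF u hu)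
  rw [← intervalIntegral.integral_mul_const]
  exact integral_mono_on_of_nonneg hab (hf.mul_const _)
    (fun u hu => mul_nonneg (hf0 u hu) hg_int) hinner

lemma abs_mul_abs_mul_le_of_decay {ε φ : ℝ → ℝ} {A B p t₀ u v : ℝ}
    (hB : 0 ≤ B) (hp : 0 ≤ p)
    (hε : ∀ t, |ε t| ≤ A * |t - t₀|) (hφ : ∀ t, φ t ≤ B * (1 + |t|) ^ (-(2 * p)))
    (hu : t₀ ≤ u) (hv : v ≤ t₀) :
    |ε u| * |ε v| * φ (u - v) ≤
      A ^ 2 * B * (1 + (u - t₀)) ^ (1 - p) * (1 + (t₀ - v)) ^ (1 - p) := by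
  have hεu : |ε u| ≤ A * (u - t₀) := by simpa [abs_of_nonneg (sub_nonneg.2 hu)] using hε u
  have hεv : |ε v| ≤ A * (t₀ - v) := by
    simpa [abs_of_nonpos (sub_nonpos.2 hv), neg_sub] using hε v
  have hφuv : φ (u - v) ≤ B * (1 + ((u - t₀) + (t₀ - v))) ^ (-(2 * p)) := by
    simpa [abs_of_nonneg (by linarith : 0 ≤ u - v)] using hφ (u - v)
  calc |ε u| * |ε v| * φ (u - v)
      ≤ |ε u| * |ε v| * (B * (1 + ((u - t₀) + (t₀ - v))) ^ (-(2 * p))) := by gcongr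
    _ ≤ (A * (u - t₀)) * (A * (t₀ - v)) * (B * (1 + ((u - t₀) + (t₀ - v))) ^ (-(2 * p))) := by
        gcongr
        exact (abs_nonneg _).trans hεu
    _ = A ^ 2 * B * ((u - t₀) * (t₀ - v) * (1 + ((u - t₀) + (t₀ - v))) ^ (-(2 * p))) := by
        ring
    _ ≤ A ^ 2 * B * ((1 + (u - t₀)) ^ (1 - p) * (1 + (t₀ - v)) ^ (1 - p)) := by
        refine mul_le_mul_of_nonneg_left ?_ (mul_nonneg (sq_nonneg A) hB)
        exact mul_mul_one_add_add_rpow_neg_le (by linarith) (by linarith) hp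
    _ = A ^ 2 * B * (1 + (u - t₀)) ^ (1 - p) * (1 + (t₀ - v)) ^ (1 - p) := by ring

theorem integral_integral_abs_mul_abs_mul_le_of_decay {ε φ : ℝ → ℝ} {A B p t₀ t₁ t₂ : ℝ}
    (hB : 0 ≤ B) (hp₀ : 0 ≤ p) (hp₂ : p < 2) (hε : ∀ t, |ε t| ≤ A * |t - t₀|)
    (hφ : ∀ t, φ t ≤ B * (1 + |t|) ^ (-(2 * p))) (h₁ : t₁ ≤ t₀) (h₂ : t₀ ≤ t₂) :
    ∫ u in t₀..t₂, ∫ v in t₁..t₀, |ε u| * |ε v| * φ (u - v) ≤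
      A ^ 2 * B * ((1 + (t₂ - t₀)) ^ (2 - p) / (2 - p)) *
        ((1 + (t₀ - t₁)) ^ (2 - p) / (2 - p)) := by
  have hr : -1 < 1 - p := by linarith
  have hexp : 1 - p + 1 = 2 - p := by ring
  have hf0 : ∀ u ∈ Icc t₀ t₂, 0 ≤ A ^ 2 * B * (1 + (u - t₀)) ^ (1 - p) := fun u hu => by
    have : 0 ≤ 1 + (u - t₀) := by linarith [hu.1]
    positivity
  have hg0 : ∀ v ∈ Icc t₁ t₀, 0 ≤ (1 + (t₀ - v)) ^ (1 - p) := fun v hv =>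
    rpow_nonneg (by linarith [hv.2]) _
  calc ∫ u in t₀..t₂, ∫ v in t₁..t₀, |ε u| * |ε v| * φ (u - v)
      ≤ (∫ u in t₀..t₂, A ^ 2 * B * (1 + (u - t₀)) ^ (1 - p)) *
          ∫ v in t₁..t₀, (1 + (t₀ - v)) ^ (1 - p) := by
        refine integral_integral_le_mul_of_le_mul h₂ h₁ ?_ ?_ hf0 hg0
          fun u hu v hv => abs_mul_abs_mul_le_of_decay hB hp₀ hε hφ hu.1 hv.2
        · refine
            (intervalIntegrable_one_add_rpow (by fun_prop) (fun u hu => ?_) _).const_mul _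
          rw [uIcc_of_le h₂] at hu
          linarith [hu.1]
        · refine intervalIntegrable_one_add_rpow (by fun_prop) (fun v hv => ?_) _
          rw [uIcc_of_le h₁] at hv
          linarith [hv.2]
    _ ≤ A ^ 2 * B * ((1 + (t₂ - t₀)) ^ (2 - p) / (2 - p)) *
          ((1 + (t₀ - t₁)) ^ (2 - p) / (2 - p)) := by
        rw [intervalIntegral.integral_const_mul, ← hexp]
        gcongr
        · exact integral_nonneg h₁ hg0
        · exact mul_nonneg (mul_nonneg (sq_nonneg A) hB)
            (div_nonneg (rpow_nonneg (by linarith) _) (by linarith))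
        · exact integral_one_add_sub_right_rpow_le hr _ _
        · exact integral_one_add_sub_left_rpow_le hr _ _

theorem double_integral_I4_bound_general
    {H : Type*} [NormedAddCommGroup H] [InnerProductSpace ℂ H]
    (W : ℝ → H →L[ℂ] H) (ς : H) (ε : ℝ → ℝ)
    (C₁ C₂ η ta tc tc' : ℝ) (hC₂ : 0 ≤ C₂)
    (hε : ∀ t : ℝ, |ε t| ≤ C₁ * η * |t - ta|)
    (hdisp : ∀ t : ℝ, ‖(inner ℂ ς (W t ς) : ℂ)‖ ≤ C₂ * (1 + |t|) ^ (-(5 : ℝ) / 2))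
    (h1 : tc ≤ ta) (h2 : ta ≤ tc') :
    (∫ u in ta..tc', ∫ v in tc..ta, |ε u| * |ε v| * ‖(inner ℂ ς (W (u - v) ς) : ℂ)‖)
      ≤ C₁ ^ 2 * C₂ * η ^ 2 * (16 / 9) *
        (1 + (tc' - ta)) ^ ((3 : ℝ) / 4) * (1 + (ta - tc)) ^ ((3 : ℝ) / 4) := by
  have hdecay :
      ∀ t : ℝ, ‖(inner ℂ ς (W t ς) : ℂ)‖ ≤ C₂ * (1 + |t|) ^ (-(2 * (5 / 4 : ℝ))) :=
    fun t => (hdisp t).trans_eq (by norm_num)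
  calc _ ≤ (C₁ * η) ^ 2 * C₂ * ((1 + (tc' - ta)) ^ (2 - 5 / 4 : ℝ) / (2 - 5 / 4)) *
          ((1 + (ta - tc)) ^ (2 - 5 / 4 : ℝ) / (2 - 5 / 4)) :=
        integral_integral_abs_mul_abs_mul_le_of_decay
          (φ := fun t => ‖(inner ℂ ς (W t ς) : ℂ)‖) hC₂ (by norm_num) (by norm_num) hε hdecay h1 h2
    _ = _ := by norm_num; ring

/-- Bound on the double integral `I₄`: if `|ε(t)| ≤ C₁η|t-t_a|` and the matrix element
`⟨ς, e^{-itH_a}ς⟩` (here written via the unitary group `W`) decays like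
`C₂(1+|t|)^{-5/2}`, then for `t_c ≤ t_a ≤ t_c'`,
`I₄ ≤ C₁²C₂ η² (16/9) (1+(t_c'-t_a))^{3/4} (1+(t_a-t_c))^{3/4}`. -/
theorem double_integral_I4_bound
    {H : Type*} [NormedAddCommGroup H] [InnerProductSpace ℂ H] [CompleteSpace H]
    (W : ℝ → H →L[ℂ] H) (hW0 : W 0 = 1)
    (hWgrp : ∀ s t : ℝ, W (s + t) = (W s).comp (W t))
    (hWunit : ∀ t : ℝ, (W t).comp (ContinuousLinearMap.adjoint (W t)) = 1)
    (ς : H) (hς : ‖ς‖ = 1)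
    (ε : ℝ → ℝ) (hmeas : Measurable ε)
    (C₁ C₂ η ta tc tc' : ℝ) (hC₁ : 0 ≤ C₁) (hC₂ : 0 ≤ C₂) (hη : 0 < η)
    (hε : ∀ t : ℝ, |ε t| ≤ C₁ * η * |t - ta|)
    (hdisp : ∀ t : ℝ, ‖(inner ℂ ς (W t ς) : ℂ)‖ ≤ C₂ * (1 + |t|) ^ (-(5 : ℝ) / 2))
    (h1 : tc ≤ ta) (h2 : ta ≤ tc') :
    (∫ u in ta..tc', ∫ v in tc..ta, |ε u| * |ε v| * ‖(inner ℂ ς (W (u - v) ς) : ℂ)‖)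
      ≤ C₁ ^ 2 * C₂ * η ^ 2 * (16 / 9) *
        (1 + (tc' - ta)) ^ ((3 : ℝ) / 4) * (1 + (ta - tc)) ^ ((3 : ℝ) / 4) :=
  double_integral_I4_bound_general W ς ε C₁ C₂ η ta tc tc' hC₂ hε hdisp h1 h2
end
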